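/- arXiv:1311.6104 — 2 statements merged into one kernel-verified Lean document; each statement's English description precedes it below -/
import Mathlib

section
/- Assume D satisfies conditions (A) and (B). Let 1 ≤ p < 2, let ω be a control function on [0,T], let x : [0,T] → ℝⁿ be continuous with |x_t − x_s| ≤ ω(s,t)^{1/p}, and let σ ∈ C¹_b(ℝ^d, L(ℝⁿ,ℝ^d)). Let ε be the constant from the local Euler estimate (depending only on ‖σ‖_∞, ‖Dσ‖_∞ and a Skorohod local-time constant C₀ for D), and let Δ = {t_k}_{k=0}^N be a partition of [0,T] such that sup_{0 ≤ k ≤ l ≤ N−1} |ω(t_k, t_{l+1}) − ω(t_k, t_l)| ≤ ε/2. Then there exists a constant C > 0, depending only on σ, p and D, such that for every Euler approximation (y^Δ, Φ^Δ) starting at y₀ ∈ cl(D) and all 0 ≤ s ≤ t ≤ T: (1) |y^Δ_t − y^Δ_s| ≤ C(1 + ω(0,T)) ω(s,t)^{1/p}, and (2) ‖Φ^Δ‖_{[s,t]} ≤ C(1 + ω(0,T)) ω(s,t)^{1/p}. -/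
open MeasureTheory Set
open scoped RealInnerProductSpace

noncomputable section

/-- The set of inward unit normal vectors at `x` at radius `r`. -/
def normalVecsAt {d : ℕ} (D : Set (EuclideanSpace ℝ (Fin d)))
    (x : EuclideanSpace ℝ (Fin d)) (r : ℝ) : Set (EuclideanSpace ℝ (Fin d)) :=
  {v | ‖v‖ = 1 ∧ Metric.ball (x - r • v) r ∩ D = ∅}

/-- The set of inward unit normal vectors at `x`. -/
def normalCone {d : ℕ} (D : Set (EuclideanSpace ℝ (Fin d)))
    (x : EuclideanSpace ℝ (Fin d)) : Set (EuclideanSpace ℝ (Fin d)) :=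
  ⋃ r ∈ Set.Ioi (0 : ℝ), normalVecsAt D x r

/-- Condition (A). -/
def CondA {d : ℕ} (D : Set (EuclideanSpace ℝ (Fin d))) (r₀ : ℝ) : Prop :=
  0 < r₀ ∧ ∀ x ∈ frontier D,
    normalCone D x = normalVecsAt D x r₀ ∧ (normalCone D x).Nonempty

/-- Condition (B). -/
def CondB {d : ℕ} (D : Set (EuclideanSpace ℝ (Fin d))) (δ β : ℝ) : Prop :=
  0 < δ ∧ 1 ≤ β ∧ ∀ x ∈ frontier D, ∃ l : EuclideanSpace ℝ (Fin d), ‖l‖ = 1 ∧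
    ∀ y ∈ Metric.ball x δ ∩ frontier D, ∀ v ∈ normalCone D y, 1 / β ≤ ⟪l, v⟫

/-- `‖w‖_{∞,[s,t]}`, the supremum of increments of `w` over `[s,t]`. -/
def supNorm {E : Type*} [NormedAddCommGroup E] (w : ℝ → E) (s t : ℝ) : ℝ :=
  sSup ((fun q : ℝ × ℝ => ‖w q.2 - w q.1‖) '' {q | s ≤ q.1 ∧ q.1 ≤ q.2 ∧ q.2 ≤ t})

/-- `‖φ‖_{[s,t]}`, the total variation of `φ` on `[s,t]`. -/
def totalVar {E : Type*} [NormedAddCommGroup E] (φ : ℝ → E) (s t : ℝ) : ℝ :=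
  (eVariationOn φ (Set.Icc s t)).toReal

/-- A control function on `[0,T]`. -/
structure IsControl (T : ℝ) (ω : ℝ → ℝ → ℝ) : Prop where
  cont : ContinuousOn (fun q : ℝ × ℝ => ω q.1 q.2) {q | 0 ≤ q.1 ∧ q.1 ≤ q.2 ∧ q.2 ≤ T}
  diag : ∀ t, 0 ≤ t → t ≤ T → ω t t = 0
  superadd : ∀ s t u, 0 ≤ s → s ≤ t → t ≤ u → u ≤ T → ω s t + ω t u ≤ ω s u

/-- `(ξ, φ)` is a solution of the Skorohod problem associated with `w` on `[a,b]`. -/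
structure SkorohodSol {d : ℕ} (D : Set (EuclideanSpace ℝ (Fin d))) (a b : ℝ)
    (w ξ φ : ℝ → EuclideanSpace ℝ (Fin d)) : Prop where
  xi_cont : ContinuousOn ξ (Set.Icc a b)
  xi_mem : ∀ t ∈ Set.Icc a b, ξ t ∈ closure D
  phi_cont : ContinuousOn φ (Set.Icc a b)
  phi_bv : BoundedVariationOn φ (Set.Icc a b)
  phi_start : φ a = 0
  eqn : ∀ t ∈ Set.Icc a b, ξ t = w t + φ t
  localTime : ∃ (nv : ℝ → EuclideanSpace ℝ (Fin d)) (μ : Measure ℝ),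
    Measurable nv ∧
    (∀ s ∈ Set.Icc a b, ξ s ∈ frontier D → nv s ∈ normalCone D (ξ s)) ∧
    (∀ u v, a ≤ u → u ≤ v → v ≤ b → μ (Set.Ioc u v) = ENNReal.ofReal (totalVar φ u v)) ∧
    (∀ t ∈ Set.Icc a b,
      φ t = ∫ s in Set.Icc a t, (frontier D).indicator (fun _ => (1 : ℝ)) (ξ s) • nv s ∂μ)

/-- `σ` is `C¹_b`: continuously differentiable, bounded, with bounded derivative. -/
def IsC1b {d n : ℕ}
    (σ : EuclideanSpace ℝ (Fin d) → EuclideanSpace ℝ (Fin n) →L[ℝ] EuclideanSpace ℝ (Fin d)) :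
    Prop :=
  ContDiff ℝ 1 σ ∧ (∃ K, ∀ y, ‖σ y‖ ≤ K) ∧ (∃ K, ∀ y, ‖fderiv ℝ σ y‖ ≤ K)

/-- `‖σ‖_∞`, the sup norm of `σ`. -/
def sigmaSup {d n : ℕ}
    (σ : EuclideanSpace ℝ (Fin d) → EuclideanSpace ℝ (Fin n) →L[ℝ] EuclideanSpace ℝ (Fin d)) :
    ℝ :=
  ⨆ y, ‖σ y‖

/-- `‖Dσ‖_∞`, the sup norm of the derivative of `σ`. -/
def sigmaDerivSup {d n : ℕ}
    (σ : EuclideanSpace ℝ (Fin d) → EuclideanSpace ℝ (Fin n) →L[ℝ] EuclideanSpace ℝ (Fin d)) :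
    ℝ :=
  ⨆ y, ‖fderiv ℝ σ y‖

/-- `C₀` is a Skorohod local-time constant for `D` (w.r.t. exponent `p` on `[0,T]`). -/
def IsLocalTimeConst {d : ℕ} (D : Set (EuclideanSpace ℝ (Fin d))) (T p C₀ : ℝ) : Prop :=
  1 < C₀ ∧
  ∀ ω : ℝ → ℝ → ℝ, IsControl T ω →
    ∀ w ξ φ : ℝ → EuclideanSpace ℝ (Fin d),
      ContinuousOn w (Set.Icc 0 T) →
      (∀ s t, 0 ≤ s → s ≤ t → t ≤ T → ‖w t - w s‖ ≤ ω s t ^ (1 / p)) →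
      SkorohodSol D 0 T w ξ φ →
      ∀ s t, 0 ≤ s → s ≤ t → t ≤ T →
        totalVar φ s t ≤
          C₀ * (ω s t + 1) * (Real.exp (C₀ * ω s t ^ (1 / p)) + 1) * ω s t ^ (1 / p)

/-- `t` is a partition `0 = t_0 < t_1 < ⋯ < t_N = T` of `[0,T]`. -/
def IsPartition (T : ℝ) {N : ℕ} (t : Fin (N + 1) → ℝ) : Prop :=
  StrictMono t ∧ t 0 = 0 ∧ t (Fin.last N) = T

/-- `(y, Φ)` is the Euler approximation associated with the partition `t`: on each
interval `[t_{k-1}, t_k]` the pair `(y, Φ(·) − Φ(t_{k-1}))` solves the Skorohod problem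
for `u ↦ y(t_{k-1}) + σ(y(t_{k-1}))(x_u − x_{t_{k-1}})`. -/
def IsEulerApprox {d n : ℕ} (D : Set (EuclideanSpace ℝ (Fin d)))
    (σ : EuclideanSpace ℝ (Fin d) → EuclideanSpace ℝ (Fin n) →L[ℝ] EuclideanSpace ℝ (Fin d))
    (x : ℝ → EuclideanSpace ℝ (Fin n)) {N : ℕ} (t : Fin (N + 1) → ℝ)
    (y Φ : ℝ → EuclideanSpace ℝ (Fin d)) (y₀ : EuclideanSpace ℝ (Fin d)) : Prop :=
  y (t 0) = y₀ ∧ Φ (t 0) = 0 ∧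
  ∀ k : Fin N, SkorohodSol D (t k.castSucc) (t k.succ)
    (fun u => y (t k.castSucc) + σ (y (t k.castSucc)) (x u - x (t k.castSucc)))
    y (fun u => Φ u - Φ (t k.castSucc))

/-- The local Euler estimate with constant `ε` holds on `[0,T]` for the domain `D`,
the coefficient `σ` and the local-time constant `C₀`: for every control `ω`, every
driver `x` controlled by `ω`, every partition and every Euler approximation, whenever
`t_k ≤ s ≤ t` with `ω(t_k,s) ≤ ε` and `ω(t_k,t) ≤ ε` one has
`‖Φ^Δ‖_{[s,t]} ≤ 3C₀‖σ‖_∞ ω(s,t)^{1/p}` and `|y^Δ_t − y^Δ_s| ≤ (1+4C₀‖σ‖_∞) ω(s,t)^{1/p}`. -/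
def LocalEulerEstimate {d n : ℕ} (D : Set (EuclideanSpace ℝ (Fin d))) (T : ℝ)
    (σ : EuclideanSpace ℝ (Fin d) → EuclideanSpace ℝ (Fin n) →L[ℝ] EuclideanSpace ℝ (Fin d))
    (p C₀ ε : ℝ) : Prop :=
  ∀ ω : ℝ → ℝ → ℝ, IsControl T ω →
  ∀ x : ℝ → EuclideanSpace ℝ (Fin n),
    ContinuousOn x (Set.Icc 0 T) →
    (∀ s t, 0 ≤ s → s ≤ t → t ≤ T → ‖x t - x s‖ ≤ ω s t ^ (1 / p)) →
  ∀ (N : ℕ) (tt : Fin (N + 1) → ℝ), IsPartition T tt →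
  ∀ (y Φ : ℝ → EuclideanSpace ℝ (Fin d)) (y₀ : EuclideanSpace ℝ (Fin d)),
    y₀ ∈ closure D → IsEulerApprox D σ x tt y Φ y₀ →
  ∀ (k : Fin (N + 1)) (s t : ℝ), tt k ≤ s → s ≤ t → t ≤ T →
    ω (tt k) s ≤ ε → ω (tt k) t ≤ ε →
      totalVar Φ s t ≤ 3 * C₀ * sigmaSup σ * ω s t ^ (1 / p) ∧
      ‖y t - y s‖ ≤ (1 + 4 * C₀ * sigmaSup σ) * ω s t ^ (1 / p)

/-- Total variation is subadditive under splitting the interval. -/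
lemma totalVar_triangle {E : Type*} [NormedAddCommGroup E] (φ : ℝ → E) {s u t : ℝ}
    (h1 : s ≤ u) (h2 : u ≤ t) : totalVar φ s t ≤ totalVar φ s u + totalVar φ u t := by
  have h := eVariationOn.Icc_add_Icc φ (s := (Set.univ : Set ℝ)) h1 h2 (Set.mem_univ u)
  simp only [Set.univ_inter] at h
  unfold totalVar
  rw [← h]
  exact ENNReal.toReal_add_le

set_option maxHeartbeats 2000000 in
/-- Lemma 3.4: global estimates for the Euler approximation, on
partitions whose `ω`-mesh is at most `ε/2`, where `ε` is the constant of the local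
Euler estimate.  The constant `C` depends only on `σ`, `p` and `D` (via `ε` and `C₀`). -/
theorem euler_global_estimate {d n : ℕ} (D : Set (EuclideanSpace ℝ (Fin d)))
    (T r₀ δ β p C₀ ε : ℝ) (hA : CondA D r₀) (hB : CondB D δ β) (hT : 0 ≤ T)
    (hp : 1 ≤ p) (hp2 : p < 2)
    (σ : EuclideanSpace ℝ (Fin d) → EuclideanSpace ℝ (Fin n) →L[ℝ] EuclideanSpace ℝ (Fin d))
    (hσ : IsC1b σ) (hC₀ : IsLocalTimeConst D T p C₀)
    (hε : 0 < ε) (hε1 : ε ≤ 1) (hLE : LocalEulerEstimate D T σ p C₀ ε) :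
    ∃ C : ℝ, 0 < C ∧
      ∀ ω : ℝ → ℝ → ℝ, IsControl T ω →
      ∀ x : ℝ → EuclideanSpace ℝ (Fin n),
        ContinuousOn x (Set.Icc 0 T) →
        (∀ s t, 0 ≤ s → s ≤ t → t ≤ T → ‖x t - x s‖ ≤ ω s t ^ (1 / p)) →
      ∀ (N : ℕ) (tt : Fin (N + 1) → ℝ), IsPartition T tt →
        (∀ (k : Fin (N + 1)) (l : Fin N), (k : ℕ) ≤ (l : ℕ) →
          |ω (tt k) (tt l.succ) - ω (tt k) (tt l.castSucc)| ≤ ε / 2) →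
      ∀ (y Φ : ℝ → EuclideanSpace ℝ (Fin d)) (y₀ : EuclideanSpace ℝ (Fin d)),
        y₀ ∈ closure D → IsEulerApprox D σ x tt y Φ y₀ →
      ∀ s t, 0 ≤ s → s ≤ t → t ≤ T →
        ‖y t - y s‖ ≤ C * (1 + ω 0 T) * ω s t ^ (1 / p) ∧
        totalVar Φ s t ≤ C * (1 + ω 0 T) * ω s t ^ (1 / p) := by
  classical
  set S := sigmaSup σ with hSdef
  have hS0 : 0 ≤ S := Real.iSup_nonneg fun y => norm_nonneg _
  have hC₀1 : 1 < C₀ := hC₀.1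
  set K : ℝ := 1 + 4 * C₀ * S with hKdef
  have hK1 : (1 : ℝ) ≤ K := by nlinarith
  have hK0 : (0 : ℝ) ≤ K := le_trans zero_le_one hK1
  have hp0 : 0 < p := lt_of_lt_of_le one_pos hp
  have hip : (0 : ℝ) ≤ 1 / p := by positivity
  refine ⟨K * (1 + 2 / ε), by positivity, ?_⟩
  intro ω hω x hxc hx N tt hpart hmesh y Φ y₀ hy₀ hE s t hs hst htT
  -- nonnegativity of ω on the domain
  have hωnn : ∀ u v, 0 ≤ u → u ≤ v → v ≤ T → 0 ≤ ω u v := by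
    intro u v h0 huv hvT
    by_contra h
    push_neg at h
    have hx1 := hx u v h0 huv hvT
    have hneg : ω u v ^ (1 / p) < 0 := by
      rw [Real.rpow_def_of_neg h]
      have hπ := Real.pi_pos
      have h1p2 : 1 / 2 < 1 / p := by
        rw [div_lt_div_iff₀ (by norm_num) hp0]; linarith
      have h1p1 : 1 / p ≤ 1 := by
        rw [div_le_one hp0]; exact hp
      have hcos : Real.cos (1 / p * Real.pi) < 0 := by
        apply Real.cos_neg_of_pi_div_two_lt_of_lt
        · nlinarith
        · nlinarith
      nlinarith [Real.exp_pos (Real.log (ω u v) * (1 / p))]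
    nlinarith [norm_nonneg (x v - x u)]
  -- monotonicity of ω
  have hmono : ∀ u v w, 0 ≤ u → u ≤ v → v ≤ w → w ≤ T →
      ω u v ≤ ω u w ∧ ω v w ≤ ω u w := by
    intro u v w h0 h1 h2 h3
    have hsa := hω.superadd u v w h0 h1 h2 h3
    have n1 := hωnn u v h0 h1 (le_trans h2 h3)
    have n2 := hωnn v w (le_trans h0 h1) h2 h3
    exact ⟨by linarith, by linarith⟩
  have htt0 : ∀ k : Fin (N + 1), 0 ≤ tt k := by
    intro k
    have := hpart.1.monotone (Fin.zero_le k)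
    rw [hpart.2.1] at this
    exact this
  have httT : ∀ k : Fin (N + 1), tt k ≤ T := by
    intro k
    have := hpart.1.monotone (Fin.le_last k)
    rw [hpart.2.2] at this
    exact this
  -- main induction
  have main : ∀ M : ℕ, ∀ a : Fin (N + 1), N - (a : ℕ) < M → ∀ u v, tt a ≤ u → u ≤ v → v ≤ T →
      ω (tt a) u ≤ ε →
      ‖y v - y u‖ ≤ K * (1 + 2 / ε * ω (tt a) v) * ω u v ^ (1 / p) ∧
      totalVar Φ u v ≤ K * (1 + 2 / ε * ω (tt a) v) * ω u v ^ (1 / p) := by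
    intro M
    induction M with
    | zero => intro a h; omega
    | succ M ih =>
      intro a ha u v hau huv hvT haε
      have h0u : 0 ≤ u := le_trans (htt0 a) hau
      have hav : tt a ≤ v := le_trans hau huv
      have hωav_nn : 0 ≤ ω (tt a) v := hωnn _ _ (htt0 a) hav hvT
      have huvnn : 0 ≤ ω u v := hωnn u v h0u huv hvT
      have hrnn : 0 ≤ ω u v ^ (1 / p) := Real.rpow_nonneg huvnn _
      have hεe : (0 : ℝ) ≤ 2 / ε := by positivity
      by_cases hcase : ω (tt a) v ≤ ε
      · have hloc := hLE ω hω x hxc hx N tt hpart y Φ y₀ hy₀ hE a u v hau huv hvT haε hcase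
        have hfac0 : 0 ≤ 2 / ε * ω (tt a) v := mul_nonneg hεe hωav_nn
        have hKfac : (1 + 4 * C₀ * S : ℝ) ≤ K * (1 + 2 / ε * ω (tt a) v) := by
          nlinarith [mul_nonneg hK0 hfac0]
        have hKfac' : (3 * C₀ * S : ℝ) ≤ K * (1 + 2 / ε * ω (tt a) v) := by
          nlinarith [mul_nonneg hK0 hfac0, mul_nonneg (le_of_lt (lt_trans one_pos hC₀1)) hS0]
        constructor
        · exact le_trans hloc.2 (mul_le_mul_of_nonneg_right hKfac hrnn)
        · exact le_trans hloc.1 (mul_le_mul_of_nonneg_right hKfac' hrnn)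
      · push_neg at hcase
        -- choose the least partition index b ≥ a with ω (tt a) (tt b) > ε/2
        set A : Finset (Fin (N + 1)) :=
          Finset.univ.filter (fun k => a ≤ k ∧ ε / 2 < ω (tt a) (tt k)) with hA
        have hlastA : Fin.last N ∈ A := by
          have hmv : ω (tt a) v ≤ ω (tt a) (tt (Fin.last N)) := by
            have := (hmono (tt a) v T (htt0 a) hav hvT le_rfl).1
            rw [hpart.2.2]; exact this
          simp only [hA, Finset.mem_filter, Finset.mem_univ, true_and]
          exact ⟨Fin.le_last a, by linarith⟩
        have hAne : A.Nonempty := ⟨_, hlastA⟩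
        set b := A.min' hAne with hb
        have hbA := A.min'_mem hAne
        have hbA' : a ≤ b ∧ ε / 2 < ω (tt a) (tt b) := by
          simpa only [hA, Finset.mem_filter, Finset.mem_univ, true_and] using hbA
        obtain ⟨hab, hεb⟩ := hbA'
        have haltb : a < b := by
          rcases lt_or_eq_of_le hab with h | h
          · exact h
          · exfalso
            rw [← h, hω.diag (tt a) (htt0 a) (httT a)] at hεb
            linarith
        have hanat : (a : ℕ) < (b : ℕ) := haltb
        have hbleN : (b : ℕ) ≤ N := Nat.lt_succ_iff.1 b.isLt
        -- ω (tt a) (tt b) ≤ ε via the mesh condition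
        set l : Fin N := ⟨(b : ℕ) - 1, by omega⟩ with hl
        have hlsucc : l.succ = b := by
          apply Fin.ext
          simp only [Fin.val_succ, hl]
          omega
        have hlcA : l.castSucc ∉ A := by
          intro hmem
          have := A.min'_le _ hmem
          rw [← hb] at this
          have : (b : ℕ) ≤ l.castSucc := this
          simp only [Fin.coe_castSucc, hl] at this
          omega
        have hlc_le : ω (tt a) (tt l.castSucc) ≤ ε / 2 := by
          by_contra h
          push_neg at h
          apply hlcA
          simp only [hA, Finset.mem_filter, Finset.mem_univ, true_and]
          refine ⟨?_, h⟩
          have : (a : ℕ) ≤ (l.castSucc : ℕ) := by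
            simp only [Fin.coe_castSucc, hl]; omega
          exact this
        have hmesh' := hmesh a l (by simp only [hl]; omega)
        rw [hlsucc] at hmesh'
        have hbε : ω (tt a) (tt b) ≤ ε := by
          have := (abs_le.1 hmesh').2
          linarith
        have htbv : tt b ≤ v := by
          by_contra h
          push_neg at h
          have := (hmono (tt a) v (tt b) (htt0 a) hav h.le (httT b)).1
          linarith
        have hNb : N - (b : ℕ) < M := by omega
        have httab : tt a ≤ tt b := hpart.1.monotone hab
        rcases le_total u (tt b) with hutb | htbu
        · -- split the interval at tt b
          have h1 := hLE ω hω x hxc hx N tt hpart y Φ y₀ hy₀ hE a u (tt b) hau hutb (httT b)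
            haε hbε
          have h2 := ih b hNb (tt b) v le_rfl htbv hvT
            (by rw [hω.diag (tt b) (htt0 b) (httT b)]; exact hε.le)
          have hsa2 := hω.superadd (tt a) (tt b) v (htt0 a) (le_trans hau hutb) htbv hvT
          have hωbv_nn : 0 ≤ ω (tt b) v := hωnn _ _ (htt0 b) htbv hvT
          have hωbv_le : ω (tt b) v ≤ ω u v := (hmono u (tt b) v h0u hutb htbv hvT).2
          have hωub_le : ω u (tt b) ≤ ω u v := (hmono u (tt b) v h0u hutb htbv hvT).1
          have hωub_nn : 0 ≤ ω u (tt b) := hωnn u (tt b) h0u hutb (httT b)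
          have hr1 : ω u (tt b) ^ (1 / p) ≤ ω u v ^ (1 / p) :=
            Real.rpow_le_rpow hωub_nn hωub_le hip
          have hr2 : ω (tt b) v ^ (1 / p) ≤ ω u v ^ (1 / p) :=
            Real.rpow_le_rpow hωbv_nn hωbv_le hip
          have hrbnn : 0 ≤ ω (tt b) v ^ (1 / p) := Real.rpow_nonneg hωbv_nn _
          have hfac2 : 1 + 2 / ε * ω (tt b) v ≤ 2 / ε * ω (tt a) v := by
            have hle : ε / 2 + ω (tt b) v ≤ ω (tt a) v := by linarith
            have h3 : (2 / ε) * (ε / 2 + ω (tt b) v) ≤ (2 / ε) * ω (tt a) v :=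
              mul_le_mul_of_nonneg_left hle hεe
            have h4 : (2 / ε) * (ε / 2) = 1 := by field_simp
            nlinarith
          -- first piece bounds
          have e1 : ‖y (tt b) - y u‖ ≤ K * ω u v ^ (1 / p) := by
            refine le_trans h1.2 ?_
            have : (1 + 4 * C₀ * S) * ω u (tt b) ^ (1 / p) ≤ K * ω u v ^ (1 / p) := by
              rw [← hKdef]
              exact mul_le_mul_of_nonneg_left hr1 hK0
            exact this
          have e1' : totalVar Φ u (tt b) ≤ K * ω u v ^ (1 / p) := by
            refine le_trans h1.1 ?_
            have h3CS : (3 * C₀ * S : ℝ) ≤ K := by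
              nlinarith [mul_nonneg (le_of_lt (lt_trans one_pos hC₀1)) hS0]
            exact mul_le_mul h3CS hr1 (Real.rpow_nonneg hωub_nn _) hK0
          -- second piece bounds
          have hfacbnn : (0 : ℝ) ≤ 1 + 2 / ε * ω (tt b) v := by
            have := mul_nonneg hεe hωbv_nn; linarith
          have e2bound : K * (1 + 2 / ε * ω (tt b) v) * ω (tt b) v ^ (1 / p) ≤
              K * (2 / ε * ω (tt a) v) * ω u v ^ (1 / p) := by
            apply mul_le_mul (mul_le_mul_of_nonneg_left hfac2 hK0) hr2 hrbnn
            exact mul_nonneg hK0 (mul_nonneg hεe hωav_nn)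
          have e2 : ‖y v - y (tt b)‖ ≤ K * (2 / ε * ω (tt a) v) * ω u v ^ (1 / p) :=
            le_trans h2.1 e2bound
          have e2' : totalVar Φ (tt b) v ≤ K * (2 / ε * ω (tt a) v) * ω u v ^ (1 / p) :=
            le_trans h2.2 e2bound
          constructor
          · have tri : ‖y v - y u‖ ≤ ‖y v - y (tt b)‖ + ‖y (tt b) - y u‖ := by
              have heq : y v - y u = (y v - y (tt b)) + (y (tt b) - y u) := by abel
              rw [heq]; exact norm_add_le _ _
            have : K * (1 + 2 / ε * ω (tt a) v) * ω u v ^ (1 / p) =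
                K * ω u v ^ (1 / p) + K * (2 / ε * ω (tt a) v) * ω u v ^ (1 / p) := by ring
            linarith
          · have tri := totalVar_triangle Φ hutb htbv
            have : K * (1 + 2 / ε * ω (tt a) v) * ω u v ^ (1 / p) =
                K * ω u v ^ (1 / p) + K * (2 / ε * ω (tt a) v) * ω u v ^ (1 / p) := by ring
            linarith
        · -- u is beyond tt b: just re-anchor at b
          have hbu : ω (tt b) u ≤ ε := by
            have hsa3 := hω.superadd (tt a) (tt b) u (htt0 a) httab htbu (le_trans huv hvT)
            have hnn3 := hωnn (tt a) (tt b) (htt0 a) httab (httT b)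
            linarith
          have hrec := ih b hNb u v htbu huv hvT hbu
          have hωle : ω (tt b) v ≤ ω (tt a) v :=
            (hmono (tt a) (tt b) v (htt0 a) httab (le_trans htbu huv) hvT).2
          have hfacle : K * (1 + 2 / ε * ω (tt b) v) * ω u v ^ (1 / p) ≤
              K * (1 + 2 / ε * ω (tt a) v) * ω u v ^ (1 / p) := by
            apply mul_le_mul_of_nonneg_right _ hrnn
            apply mul_le_mul_of_nonneg_left _ hK0
            have := mul_le_mul_of_nonneg_left hωle hεe
            linarith
          exact ⟨le_trans hrec.1 hfacle, le_trans hrec.2 hfacle⟩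
  -- choose the anchor: the greatest partition index ≤ s
  set Aset : Finset (Fin (N + 1)) := Finset.univ.filter (fun k => tt k ≤ s) with hAs
  have h0mem : (0 : Fin (N + 1)) ∈ Aset := by
    simp only [hAs, Finset.mem_filter, Finset.mem_univ, true_and]
    rw [hpart.2.1]; exact hs
  have hAsne : Aset.Nonempty := ⟨0, h0mem⟩
  set a := Aset.max' hAsne with ha
  have haS : tt a ≤ s := by
    have := Aset.max'_mem hAsne
    simpa only [hAs, Finset.mem_filter, Finset.mem_univ, true_and] using this
  have haε : ω (tt a) s ≤ ε := by
    rcases eq_or_lt_of_le (Nat.lt_succ_iff.1 a.isLt) with haN | haN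
    · have halast : a = Fin.last N := Fin.ext haN
      have hsT : s = T := by
        apply le_antisymm (le_trans hst htT)
        rw [halast, hpart.2.2] at haS
        exact haS
      rw [halast, hpart.2.2, hsT, hω.diag T hT le_rfl]
      exact hε.le
    · set l : Fin N := ⟨(a : ℕ), haN⟩ with hl
      have hnext : s < tt l.succ := by
        by_contra h
        push_neg at h
        have hmem : l.succ ∈ Aset := by
          simp only [hAs, Finset.mem_filter, Finset.mem_univ, true_and]
          exact h
        have hle := Aset.le_max' _ hmem
        rw [← ha] at hle
        have : (l.succ : ℕ) ≤ (a : ℕ) := hle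
        simp only [Fin.val_succ, hl] at this
        omega
      have hlc : l.castSucc = a := Fin.ext rfl
      have hmesh' := hmesh a l (le_refl _)
      rw [hlc, hω.diag (tt a) (htt0 a) (httT a)] at hmesh'
      have h1 : ω (tt a) (tt l.succ) ≤ ε / 2 := by
        have := (abs_le.1 hmesh').2
        linarith
      have h2 : ω (tt a) s ≤ ω (tt a) (tt l.succ) :=
        (hmono (tt a) s (tt l.succ) (htt0 a) haS hnext.le (httT _)).1
      linarith
  have hres := main (N + 1) a (by omega) s t haS hst htT haε
  -- conclude
  have h0T : 0 ≤ ω 0 T := hωnn 0 T le_rfl hT le_rfl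
  have hεe : (0 : ℝ) ≤ 2 / ε := by positivity
  have hrnn : 0 ≤ ω s t ^ (1 / p) :=
    Real.rpow_nonneg (hωnn s t hs hst htT) _
  have hbig : K * (1 + 2 / ε * ω (tt a) t) ≤ K * (1 + 2 / ε) * (1 + ω 0 T) := by
    have h1 : ω (tt a) t ≤ ω 0 T := by
      have l1 := (hmono 0 (tt a) t le_rfl (htt0 a) (le_trans haS hst) htT).2
      have l2 := (hmono 0 t T le_rfl (le_trans (htt0 a) (le_trans haS hst)) htT le_rfl).1
      linarith
    nlinarith [mul_nonneg hK0 h0T, mul_nonneg hK0 hεe,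
      mul_le_mul_of_nonneg_left (mul_le_mul_of_nonneg_left h1 hεe) hK0]
  constructor
  · exact le_trans hres.1 (mul_le_mul_of_nonneg_right hbig hrnn)
  · exact le_trans hres.2 (mul_le_mul_of_nonneg_right hbig hrnn)

end
end

section
/- Assume D satisfies condition (H1). Let T' > 0, let η : [0,T'] → ℝ^d be continuous with η_0 = 0, let x : [0,T'] → ℝⁿ be continuous with x_0 = 0, let F : ℝ^d ⊗ ℝⁿ → ℝ^d be a nonzero linear map, and let y₀ ∈ cl(D). Let Δ = {0 = t_0 < ⋯ < t_N = T'} be a partition and let (y^Δ, Φ^Δ) be an Euler approximation, i.e. y^Δ_0 = y₀, Φ^Δ(0) = 0, and on each [t_k, t_{k+1}] the pair (y^Δ, Φ^Δ(·) − Φ^Δ(t_k)) solves the Skorohod problem associated with t ↦ y^Δ_{t_k} + (η_t − η_{t_k}) + F(Φ^Δ(t_k) ⊗ (x_t − x_{t_k})). If ‖x‖_{∞,[0,T']} ≤ 1/(10 C_D ‖F‖), then ‖Φ^Δ‖_{[0,T']} ≤ 2 C_D ‖η‖_{∞,[0,T']}, and moreover for all 0 ≤ s ≤ t ≤ T', ‖Φ^Δ‖_{[s,t]}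 ≤ (5/4) C_D ‖η‖_{∞,[s,t]} + 10 C_D² ‖F‖ ‖η‖_{∞,[0,T']} ‖x‖_{∞,[s,t]}. -/
open MeasureTheory Set
open scoped RealInnerProductSpace

noncomputable section

/-- Condition (H1) with constant `C_D`: (A) holds, the Skorohod problem is uniquely
solvable on every subinterval of `[0,T]`, and `‖L(w)‖_{[s,t]} ≤ C_D ‖w‖_{∞,[s,t]}`. -/
def CondH1 {d : ℕ} (D : Set (EuclideanSpace ℝ (Fin d))) (T C_D : ℝ) : Prop :=
  (∃ r₀, CondA D r₀) ∧ 0 < C_D ∧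
  ∀ a b, 0 ≤ a → a ≤ b → b ≤ T →
    ∀ w : ℝ → EuclideanSpace ℝ (Fin d), ContinuousOn w (Set.Icc a b) →
      w a ∈ closure D →
      (∃ ξ φ, SkorohodSol D a b w ξ φ) ∧
      (∀ ξ φ ξ' φ', SkorohodSol D a b w ξ φ → SkorohodSol D a b w ξ' φ' →
        ∀ u ∈ Set.Icc a b, ξ u = ξ' u ∧ φ u = φ' u) ∧
      (∀ ξ φ, SkorohodSol D a b w ξ φ →
        ∀ s u, a ≤ s → s ≤ u → u ≤ b → totalVar φ s u ≤ C_D * supNorm w s u)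

/-- The elementary tensor `a ⊗ b ∈ ℝ^d ⊗ ℝ^n`, realized in `EuclideanSpace ℝ (Fin d × Fin n)`. -/
def outerTensor {d n : ℕ} (a : EuclideanSpace ℝ (Fin d)) (b : EuclideanSpace ℝ (Fin n)) :
    EuclideanSpace ℝ (Fin d × Fin n) :=
  (WithLp.equiv 2 (Fin d × Fin n → ℝ)).symm (fun q => a q.1 * b q.2)

/-- `(y, Φ)` is the Euler approximation for the implicit Skorohod equation: on each
`[t_k, t_{k+1}]`, the pair `(y, Φ(·) − Φ(t_k))` solves the Skorohod problem for
`u ↦ y(t_k) + (η_u − η_{t_k}) + F(Φ(t_k) ⊗ (x_u − x_{t_k}))`. -/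
def IsImplicitEuler {d n : ℕ} (D : Set (EuclideanSpace ℝ (Fin d)))
    (η : ℝ → EuclideanSpace ℝ (Fin d)) (x : ℝ → EuclideanSpace ℝ (Fin n))
    (F : EuclideanSpace ℝ (Fin d × Fin n) →L[ℝ] EuclideanSpace ℝ (Fin d))
    {N : ℕ} (t : Fin (N + 1) → ℝ)
    (y Φ : ℝ → EuclideanSpace ℝ (Fin d)) (y₀ : EuclideanSpace ℝ (Fin d)) : Prop :=
  y (t 0) = y₀ ∧ Φ (t 0) = 0 ∧
  ∀ k : Fin N, SkorohodSol D (t k.castSucc) (t k.succ)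
    (fun u => y (t k.castSucc) + (η u - η (t k.castSucc)) +
      F (outerTensor (Φ (t k.castSucc)) (x u - x (t k.castSucc))))
    y (fun u => Φ u - Φ (t k.castSucc))

/-!
Gluing the Skorohod problems of the successive partition intervals shows that `(y, Φ)` solves one
Skorohod problem on `[0, T']`, driven by `y₀ + η + F(∫ Φ^Δ ⊗ dx)` with `Φ^Δ` the step function of
`Φ` on the partition. After summation by parts, the increments of `∫ Φ^Δ ⊗ dx` over `[s, u]` are
at most `‖Φ‖_{[0,T']} ‖x‖_{∞,[s,u]}`, so (H1) gives
`‖Φ‖_{[s,u]} ≤ C_D (‖η‖_{∞,[s,u]} + ‖F‖ ‖Φ‖_{[0,T']} ‖x‖_{∞,[s,u]})`.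
On `[0, T']` the smallness of `x` makes the feedback term at most `‖Φ‖_{[0,T']} / 10`, whence
`‖Φ‖_{[0,T']} ≤ (10/9) C_D ‖η‖_{∞,[0,T']}`, and substituting this back gives the local bound.
-/

section OuterTensor

variable {d n : ℕ}

theorem norm_outerTensor (a : EuclideanSpace ℝ (Fin d)) (b : EuclideanSpace ℝ (Fin n)) :
    ‖outerTensor a b‖ = ‖a‖ * ‖b‖ := by
  rw [EuclideanSpace.norm_eq, EuclideanSpace.norm_eq, EuclideanSpace.norm_eq,
    ← Real.sqrt_mul (by positivity), Finset.sum_mul_sum, Fintype.sum_prod_type]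
  simp [outerTensor, mul_pow]

variable (d n) in
def outerTensorL :
    EuclideanSpace ℝ (Fin d) →L[ℝ] EuclideanSpace ℝ (Fin n) →L[ℝ]
      EuclideanSpace ℝ (Fin d × Fin n) :=
  LinearMap.mkContinuous₂
    (LinearMap.mk₂ ℝ outerTensor
      (fun _ _ _ => by ext; simp [outerTensor, add_mul])
      (fun _ _ _ => by ext; simp [outerTensor, mul_assoc])
      (fun _ _ _ => by ext; simp [outerTensor, mul_add])
      (fun _ _ _ => by ext; simp [outerTensor, mul_left_comm]))
    1 (fun a b => by simp [norm_outerTensor])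

@[simp]
theorem outerTensorL_apply (a : EuclideanSpace ℝ (Fin d)) (b : EuclideanSpace ℝ (Fin n)) :
    outerTensorL d n a b = outerTensor a b := rfl

theorem norm_outerTensorL_le : ‖outerTensorL d n‖ ≤ 1 :=
  LinearMap.mkContinuous₂_norm_le _ zero_le_one _

end OuterTensor

section Increments

variable {E : Type*} [NormedAddCommGroup E] {w φ : ℝ → E} {μ₁ μ₂ : Measure ℝ} {s u a b c : ℝ}

theorem supNorm_nonneg (w : ℝ → E) (s u : ℝ) : 0 ≤ supNorm w s u :=
  Real.sSup_nonneg (by rintro _ ⟨q, _, rfl⟩; positivity)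

theorem supNorm_le {M : ℝ} (hM : 0 ≤ M)
    (h : ∀ a b, s ≤ a → a ≤ b → b ≤ u → ‖w b - w a‖ ≤ M) : supNorm w s u ≤ M :=
  Real.sSup_le (by rintro _ ⟨q, ⟨h1, h2, h3⟩, rfl⟩; exact h _ _ h1 h2 h3) hM

theorem norm_sub_le_supNorm (hw : ContinuousOn w (Icc s u)) (hsa : s ≤ a) (hab : a ≤ b)
    (hbu : b ≤ u) : ‖w b - w a‖ ≤ supNorm w s u := by
  refine le_csSup ?_ ⟨(a, b), ⟨hsa, hab, hbu⟩, rfl⟩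
  obtain ⟨C, hC⟩ := (isCompact_Icc.image_of_continuousOn hw).isBounded.exists_norm_le
  refine ⟨C + C, ?_⟩
  rintro _ ⟨q, ⟨h1, h2, h3⟩, rfl⟩
  exact (norm_sub_le _ _).trans (add_le_add (hC _ ⟨q.2, ⟨h1.trans h2, h3⟩, rfl⟩)
    (hC _ ⟨q.1, ⟨h1, h2.trans h3⟩, rfl⟩))

theorem norm_sub_max_le_supNorm (hw : ContinuousOn w (Icc s u)) (hsa : s ≤ a) (hab : a ≤ b)
    (hbu : b ≤ u) (c : ℝ) : ‖w (max b c) - w (max a c)‖ ≤ supNorm w s u := by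
  rcases le_total c a with hca | hac
  · rw [max_eq_left hca, max_eq_left (hca.trans hab)]
    exact norm_sub_le_supNorm hw hsa hab hbu
  rcases le_total c b with hcb | hbc
  · rw [max_eq_left hcb, max_eq_right hac]
    exact norm_sub_le_supNorm hw (hsa.trans hac) hcb hbu
  · rw [max_eq_right hbc, max_eq_right hac, sub_self, norm_zero]
    exact supNorm_nonneg w s u

theorem totalVar_nonneg (φ : ℝ → E) (a b : ℝ) : 0 ≤ totalVar φ a b := ENNReal.toReal_nonneg

theorem eVariationOn_sub_const (φ : ℝ → E) (c : E) (S : Set ℝ) :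
    eVariationOn (fun u => φ u - c) S = eVariationOn φ S := by
  simp only [eVariationOn, edist_sub_right]

theorem totalVar_sub_const (φ : ℝ → E) (c : E) (a b : ℝ) :
    totalVar (fun u => φ u - c) a b = totalVar φ a b := by
  rw [totalVar, totalVar, eVariationOn_sub_const]

theorem ofReal_totalVar (hφ : BoundedVariationOn φ (Icc a b)) (hau : a ≤ u) (hvb : c ≤ b) :
    ENNReal.ofReal (totalVar φ u c) = eVariationOn φ (Icc u c) :=
  ENNReal.ofReal_toReal (ne_top_of_le_ne_top hφ (eVariationOn.mono φ (Icc_subset_Icc hau hvb)))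

theorem sum_norm_sub_le_totalVar (hφ : BoundedVariationOn φ (Icc a b)) {τ : ℕ → ℝ}
    (hτ : Monotone τ) (hτab : ∀ i, τ i ∈ Icc a b) (N : ℕ) :
    ∑ i ∈ Finset.range N, ‖φ (τ (i + 1)) - φ (τ i)‖ ≤ totalVar φ a b := by
  rw [totalVar, ← ENNReal.ofReal_le_iff_le_toReal hφ,
    ENNReal.ofReal_sum_of_nonneg (fun _ _ => norm_nonneg _)]
  simpa only [ofReal_norm, ← edist_eq_enorm_sub] using
    eVariationOn.sum_le (f := φ) (n := N) hτ hτab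

theorem BoundedVariationOn.Icc_append (h₁ : BoundedVariationOn φ (Icc a b))
    (h₂ : BoundedVariationOn φ (Icc b c)) (hab : a ≤ b) (hbc : b ≤ c) :
    BoundedVariationOn φ (Icc a c) := by
  have := eVariationOn.Icc_add_Icc φ hab hbc (mem_univ b)
  simp only [univ_inter] at this
  rw [BoundedVariationOn, ← this]
  exact ENNReal.add_ne_top.2 ⟨h₁, h₂⟩

theorem measure_Ioc_of_restrict_Ioc_add_restrict_Ioc (hφ : BoundedVariationOn φ (Icc a c))
    (hab : a ≤ b) (hbc : b ≤ c)
    (hμ₁ : ∀ u v, a ≤ u → u ≤ v → v ≤ b → μ₁ (Ioc u v) = ENNReal.ofReal (totalVar φ u v))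
    (hμ₂ : ∀ u v, b ≤ u → u ≤ v → v ≤ c → μ₂ (Ioc u v) = ENNReal.ofReal (totalVar φ u v))
    {u v : ℝ} (hau : a ≤ u) (huv : u ≤ v) (hvc : v ≤ c) :
    (μ₁.restrict (Ioc a b) + μ₂.restrict (Ioc b c)) (Ioc u v) =
      ENNReal.ofReal (totalVar φ u v) := by
  rw [Measure.add_apply, Measure.restrict_apply measurableSet_Ioc,
    Measure.restrict_apply measurableSet_Ioc, Ioc_inter_Ioc, Ioc_inter_Ioc,
    max_eq_left hau, min_eq_left hvc]
  rcases le_total v b with hvb | hbv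
  · rw [min_eq_left hvb, Ioc_eq_empty (not_lt.2 (hvb.trans (le_max_right u b))), measure_empty,
      add_zero]
    exact hμ₁ u v hau huv hvb
  rcases le_total u b with hub | hbu
  · rw [min_eq_right hbv, max_eq_right hub, hμ₁ u b hau hub le_rfl, hμ₂ b v le_rfl hbv hvc,
      ofReal_totalVar hφ hau hbc, ofReal_totalVar hφ hab hvc, ofReal_totalVar hφ hau hvc]
    simpa only [univ_inter] using eVariationOn.Icc_add_Icc φ hub hbv (mem_univ b)
  · rw [min_eq_right hbv, max_eq_left hbu, Ioc_eq_empty (not_lt.2 hbu), measure_empty,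
      zero_add]
    exact hμ₂ u v hbu huv hvc

end Increments

section LocalTime

variable {E : Type*} [NormedAddCommGroup E] [NormedSpace ℝ E] {f φ : ℝ → E} {μ : Measure ℝ}
  {a b v : ℝ}

/-- If `f` is not integrable at the atom `a`, then every `φ t` is the junk value `0`, so `φ` is
constant and `Ioc a v` is null. -/
theorem setIntegral_Ioc_eq_sub (hφ : ∀ t ∈ Icc a b, φ t = ∫ s in Icc a t, f s ∂μ)
    (hμ : μ (Ioc a v) = ENNReal.ofReal (totalVar φ a v)) (hf : IntegrableOn f (Ioc a v) μ)
    (hv : v ∈ Icc a b) : ∫ s in Ioc a v, f s ∂μ = φ v - φ a := by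
  have hab : a ≤ b := hv.1.trans hv.2
  have hsplit (t : ℝ) (ht : a ≤ t) : Icc a t = {a} ∪ Ioc a t := by
    rw [← Ioc_insert_left ht, insert_eq]
  by_cases ha : IntegrableOn f {a} μ
  · have hφa : φ a = ∫ s in {a}, f s ∂μ := by rw [hφ a ⟨le_rfl, hab⟩, Icc_self]
    rw [hφ v hv, hφa, hsplit v hv.1,
      setIntegral_union (disjoint_singleton_left.2 (fun h => lt_irrefl a h.1)) measurableSet_Ioc
        ha hf, add_sub_cancel_left]
  · have hconst : ∀ t ∈ Icc a v, φ t = 0 := fun t ht => by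
      rw [hφ t ⟨ht.1, ht.2.trans hv.2⟩, integral_undef]
      exact fun hint => ha (IntegrableOn.mono_set hint (singleton_subset_iff.2 ⟨le_rfl, ht.1⟩))
    have hvar : totalVar φ a v = 0 := by
      rw [totalVar, (eVariationOn.eq_zero_iff φ).2, ENNReal.toReal_zero]
      intro p hp q hq
      rw [hconst p hp, hconst q hq, edist_self]
    rw [setIntegral_measure_zero _ (by rw [hμ, hvar, ENNReal.ofReal_zero]),
      hconst v ⟨hv.1, le_rfl⟩, hconst a ⟨le_rfl, hv.1⟩, sub_zero]

end LocalTime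

section Skorohod

variable {d : ℕ} {D : Set (EuclideanSpace ℝ (Fin d))} {a b : ℝ}
  {ξ nv : ℝ → EuclideanSpace ℝ (Fin d)} {μ : Measure ℝ}

def reflectionDensity (D : Set (EuclideanSpace ℝ (Fin d))) (ξ nv : ℝ → EuclideanSpace ℝ (Fin d))
    (s : ℝ) : EuclideanSpace ℝ (Fin d) :=
  (frontier D).indicator (fun _ => (1 : ℝ)) (ξ s) • nv s

theorem norm_reflectionDensity_le
    (hnv : ∀ s ∈ Icc a b, ξ s ∈ frontier D → nv s ∈ normalCone D (ξ s)) {s : ℝ}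
    (hs : s ∈ Icc a b) : ‖reflectionDensity D ξ nv s‖ ≤ 1 := by
  by_cases hξs : ξ s ∈ frontier D
  · obtain ⟨r, -, hr⟩ := mem_iUnion₂.1 (hnv s hs hξs)
    simp [reflectionDensity, indicator_of_mem hξs, hr.1]
  · simp [reflectionDensity, indicator_of_notMem hξs]

theorem integrableOn_reflectionDensity (hξ : ContinuousOn ξ (Icc a b)) (hnv_meas : Measurable nv)
    (hnv : ∀ s ∈ Icc a b, ξ s ∈ frontier D → nv s ∈ normalCone D (ξ s))
    (hμ : μ (Ioc a b) ≠ ⊤) : IntegrableOn (reflectionDensity D ξ nv) (Ioc a b) μ := by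
  have hξ_meas : AEMeasurable ξ (μ.restrict (Ioc a b)) :=
    (hξ.mono Ioc_subset_Icc_self).aemeasurable measurableSet_Ioc
  refine ⟨?_, .restrict_of_bounded (C := 1) hμ.lt_top ?_⟩
  · exact (((measurable_const (a := (1 : ℝ))).indicator isClosed_frontier.measurableSet
      ).comp_aemeasurable hξ_meas).smul hnv_meas.aemeasurable |>.aestronglyMeasurable
  · filter_upwards [ae_restrict_mem measurableSet_Ioc] with s hs
    exact norm_reflectionDensity_le hnv (Ioc_subset_Icc_self hs)

end Skorohod

section Gluing

variable {E : Type*} [NormedAddCommGroup E] [NormedSpace ℝ E] {f f₁ f₂ φ : ℝ → E}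
  {μ₁ μ₂ : Measure ℝ} {a b c : ℝ}

theorem Icc_inter_Ioc_of_le {p q τ : ℝ} (hap : a ≤ p) : Icc a τ ∩ Ioc p q = Ioc p (min τ q) := by
  ext z
  simp only [mem_inter_iff, mem_Icc, mem_Ioc, le_min_iff]
  exact ⟨fun ⟨⟨_, hzτ⟩, hpz, hzq⟩ => ⟨hpz, hzτ, hzq⟩,
    fun ⟨hpz, hzτ, hzq⟩ => ⟨⟨hap.trans hpz.le, hzτ⟩, hpz, hzq⟩⟩

theorem setIntegral_Icc_of_restrict_Ioc_add_restrict_Ioc (hab : a ≤ b)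
    (hf₁ : EqOn f f₁ (Ioc a b)) (hf₂ : EqOn f f₂ (Ioc b c))
    (hi₁ : IntegrableOn f₁ (Ioc a b) μ₁) (hi₂ : IntegrableOn f₂ (Ioc b c) μ₂)
    (h₁ : ∀ t ∈ Icc a b, ∫ s in Ioc a t, f₁ s ∂μ₁ = φ t - φ a)
    (h₂ : ∀ t ∈ Icc b c, ∫ s in Ioc b t, f₂ s ∂μ₂ = φ t - φ b) {τ : ℝ} (hτ : τ ∈ Icc a c) :
    ∫ s in Icc a τ, f s ∂(μ₁.restrict (Ioc a b) + μ₂.restrict (Ioc b c)) = φ τ - φ a := by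
  have hi₁' : IntegrableOn f (Ioc a b) μ₁ := hi₁.congr_fun hf₁.symm measurableSet_Ioc
  have hi₂' : IntegrableOn f (Ioc b c) μ₂ := hi₂.congr_fun hf₂.symm measurableSet_Ioc
  rw [Measure.restrict_add, Measure.restrict_restrict measurableSet_Icc,
    Measure.restrict_restrict measurableSet_Icc, Icc_inter_Ioc_of_le le_rfl,
    Icc_inter_Ioc_of_le hab, min_eq_left hτ.2,
    integral_add_measure (hi₁'.mono_set (Ioc_subset_Ioc_right (min_le_right _ _)))
      (hi₂'.mono_set (Ioc_subset_Ioc_right hτ.2)),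
    setIntegral_congr_fun measurableSet_Ioc
      (hf₁.mono (Ioc_subset_Ioc_right (min_le_right _ _))),
    h₁ _ ⟨le_min hτ.1 hab, min_le_right _ _⟩]
  rcases le_total τ b with hτb | hbτ
  · rw [min_eq_left hτb, Ioc_eq_empty (not_lt.2 hτb), Measure.restrict_empty,
      integral_zero_measure, add_zero]
  · rw [min_eq_right hbτ, setIntegral_congr_fun measurableSet_Ioc
      (hf₂.mono (Ioc_subset_Ioc_right hτ.2)), h₂ τ ⟨hbτ, hτ.2⟩, sub_add_sub_cancel']

end Gluing

namespace SkorohodSol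

variable {d : ℕ} {D : Set (EuclideanSpace ℝ (Fin d))} {a b c : ℝ}
  {w w' ξ φ : ℝ → EuclideanSpace ℝ (Fin d)}

theorem congr_driver (h : SkorohodSol D a b w ξ φ) (hw : EqOn w w' (Icc a b)) :
    SkorohodSol D a b w' ξ φ :=
  { h with eqn := fun t ht => (h.eqn t ht).trans (by rw [hw ht]) }

theorem continuousOn_driver (h : SkorohodSol D a b w ξ φ) : ContinuousOn w (Icc a b) :=
  (h.xi_cont.sub h.phi_cont).congr fun t ht => by
    rw [Pi.sub_apply, h.eqn t ht, add_sub_cancel_right]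

theorem driver_mem_closure (h : SkorohodSol D a b w ξ φ) (hab : a ≤ b) : w a ∈ closure D := by
  have h₀ := h.xi_mem a ⟨le_rfl, hab⟩
  rwa [h.eqn a ⟨le_rfl, hab⟩, h.phi_start, add_zero] at h₀

theorem exists_localTime_Ioc (h : SkorohodSol D a b w ξ φ) (hab : a ≤ b) :
    ∃ (nv : ℝ → EuclideanSpace ℝ (Fin d)) (μ : Measure ℝ), Measurable nv ∧
      (∀ s ∈ Icc a b, ξ s ∈ frontier D → nv s ∈ normalCone D (ξ s)) ∧
      (∀ u v, a ≤ u → u ≤ v → v ≤ b → μ (Ioc u v) = ENNReal.ofReal (totalVar φ u v)) ∧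
      IntegrableOn (reflectionDensity D ξ nv) (Ioc a b) μ ∧
      ∀ t ∈ Icc a b, ∫ s in Ioc a t, reflectionDensity D ξ nv s ∂μ = φ t - φ a := by
  obtain ⟨nv, μ, hnv_meas, hnv, hμ, hφ⟩ := h.localTime
  have hint : IntegrableOn (reflectionDensity D ξ nv) (Ioc a b) μ :=
    integrableOn_reflectionDensity h.xi_cont hnv_meas hnv
      (by rw [hμ a b le_rfl hab le_rfl]; exact ENNReal.ofReal_ne_top)
  exact ⟨nv, μ, hnv_meas, hnv, hμ, hint, fun t ht => setIntegral_Ioc_eq_sub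
    (f := reflectionDensity D ξ nv) hφ (hμ a t le_rfl ht.1 ht.2)
    (hint.mono_set (Ioc_subset_Ioc_right ht.2)) ht⟩

theorem append (h₁ : SkorohodSol D a b w ξ φ) (h₂ : SkorohodSol D b c w' ξ (fun u => φ u - φ b))
    (hw : ∀ u ∈ Icc b c, w' u - w' b = w u - w b) (hab : a ≤ b) (hbc : b ≤ c) :
    SkorohodSol D a c w ξ φ := by
  have hcover {t : ℝ} (ht : t ∈ Icc a c) : t ∈ Icc a b ∨ t ∈ Icc b c :=
    (le_total t b).imp (fun h => ⟨ht.1, h⟩) (fun h => ⟨h, ht.2⟩)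
  have hφ₂ : ContinuousOn φ (Icc b c) :=
    (h₂.phi_cont.add (continuousOn_const (c := φ b))).congr
      fun t _ => (sub_add_cancel (φ t) (φ b)).symm
  have hbv : BoundedVariationOn φ (Icc a c) := h₁.phi_bv.Icc_append
    (by simpa only [BoundedVariationOn, eVariationOn_sub_const] using h₂.phi_bv) hab hbc
  obtain ⟨nv₁, μ₁, hm₁, hn₁, hμ₁, hi₁, hφ₁⟩ := h₁.exists_localTime_Ioc hab
  obtain ⟨nv₂, μ₂, hm₂, hn₂, hμ₂, hi₂, hφ₂'⟩ := h₂.exists_localTime_Ioc hbc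
  refine ⟨?_, fun t ht => (hcover ht).elim (h₁.xi_mem t) (h₂.xi_mem t), ?_, hbv, h₁.phi_start,
    ?_, fun s => if s ≤ b then nv₁ s else nv₂ s, μ₁.restrict (Ioc a b) + μ₂.restrict (Ioc b c),
    hm₁.ite measurableSet_Iic hm₂, ?_,
    fun u v hu huv hv => measure_Ioc_of_restrict_Ioc_add_restrict_Ioc hbv hab hbc hμ₁
      (fun u v h1 h2 h3 => by rw [hμ₂ u v h1 h2 h3, totalVar_sub_const]) hu huv hv, ?_⟩
  · exact Icc_union_Icc_eq_Icc hab hbc ▸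
      h₁.xi_cont.union_of_isClosed h₂.xi_cont isClosed_Icc isClosed_Icc
  · exact Icc_union_Icc_eq_Icc hab hbc ▸
      h₁.phi_cont.union_of_isClosed hφ₂ isClosed_Icc isClosed_Icc
  · intro t ht
    rcases hcover ht with ht | ht
    · exact h₁.eqn t ht
    linear_combination (norm := module)
      h₂.eqn t ht + hw t ht - h₂.eqn b ⟨le_rfl, hbc⟩ + h₁.eqn b ⟨hab, le_rfl⟩
  · intro s hs hξs
    by_cases hsb : s ≤ b
    · simpa only [if_pos hsb] using hn₁ s ⟨hs.1, hsb⟩ hξs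
    · simpa only [if_neg hsb] using hn₂ s ⟨(not_le.1 hsb).le, hs.2⟩ hξs
  · intro τ hτ
    rw [eq_comm, ← sub_zero (φ τ), ← h₁.phi_start]
    exact setIntegral_Icc_of_restrict_Ioc_add_restrict_Ioc hab
      (fun s hs => by simp only [reflectionDensity, if_pos hs.2])
      (fun s hs => by simp only [reflectionDensity, if_neg (not_le.2 hs.1)]) hi₁ hi₂ hφ₁
      (by simpa only [sub_self, sub_zero] using hφ₂') hτ

theorem of_pieces {τ : ℕ → ℝ} (hτ : Monotone τ) {N : ℕ} (hN : 0 < N)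
    {w' : ℕ → ℝ → EuclideanSpace ℝ (Fin d)}
    (h : ∀ k < N, SkorohodSol D (τ k) (τ (k + 1)) (w' k) ξ (fun u => φ u - φ (τ k)))
    (hw : ∀ k < N, ∀ u ∈ Icc (τ k) (τ (k + 1)), w' k u - w' k (τ k) = w u - w (τ k))
    (hφ₀ : φ (τ 0) = 0) (hξ₀ : ξ (τ 0) = w (τ 0)) : SkorohodSol D (τ 0) (τ N) w ξ φ := by
  have hfirst : SkorohodSol D (τ 0) (τ 1) w ξ φ := by
    have h₀ := h 0 hN
    simp only [hφ₀, sub_zero] at h₀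
    refine h₀.congr_driver fun u hu => ?_
    linear_combination (norm := module)
      hw 0 hN u hu + hξ₀ - h₀.eqn (τ 0) ⟨le_rfl, hτ zero_le_one⟩ - hφ₀
  refine Nat.le_induction (m := 1) (P := fun m _ => m ≤ N → SkorohodSol D (τ 0) (τ m) w ξ φ)
    (fun _ => hfirst) (fun m _ ih hmN => (ih (by omega)).append (h m (by omega)) (hw m (by omega))
      (hτ (Nat.zero_le m)) (hτ m.le_succ)) N hN le_rfl

end SkorohodSol

section StepIntegral

variable {E F G : Type*} [NormedAddCommGroup E] [NormedSpace ℝ E] [NormedAddCommGroup F]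
  [NormedSpace ℝ F] [NormedAddCommGroup G] [NormedSpace ℝ G] (B : E →L[ℝ] F →L[ℝ] G)
  (τ : ℕ → ℝ) (N : ℕ) (φ : ℝ → E) (x : ℝ → F)

/-- Summation by parts form of `∫_{τ 0}^v B (φ (τ k) - φ (τ 0)) dx_r`, where `k` is the index
with `τ k ≤ r < τ (k + 1)`. -/
def stepIntegral (v : ℝ) : G :=
  ∑ i ∈ Finset.range N, B (φ (τ (i + 1)) - φ (τ i)) (x (max v (τ (i + 1))) - x (τ (i + 1)))

theorem stepIntegral_of_le (hτ : Monotone τ) {v : ℝ} (hv : v ≤ τ 0) :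
    stepIntegral B τ N φ x v = 0 :=
  Finset.sum_eq_zero fun i _ => by
    rw [max_eq_right (hv.trans (hτ (Nat.zero_le _))), sub_self, map_zero]

theorem stepIntegral_sub_of_mem_Icc (hτ : Monotone τ) {k : ℕ} (hk : k < N) {u : ℝ}
    (hu : u ∈ Icc (τ k) (τ (k + 1))) :
    stepIntegral B τ N φ x u - stepIntegral B τ N φ x (τ k) =
      B (φ (τ k) - φ (τ 0)) (x u - x (τ k)) := by
  rw [stepIntegral, stepIntegral, ← Finset.sum_sub_distrib,
    ← Finset.sum_range_add_sum_Ico _ hk.le, ← Finset.sum_range_sub (fun i => φ (τ i)) k, map_sum,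
    sum_apply, Finset.sum_eq_zero (s := Finset.Ico k N), add_zero]
  · refine Finset.sum_congr rfl fun i hi => ?_
    have hik : τ (i + 1) ≤ τ k := hτ (Finset.mem_range.1 hi)
    rw [max_eq_left (hik.trans hu.1), max_eq_left hik, ← map_sub, sub_sub_sub_cancel_right]
  · intro i hi
    have hki : u ≤ τ (i + 1) := hu.2.trans (hτ (by simp at hi; omega))
    rw [max_eq_right hki, max_eq_right (hu.1.trans hki), sub_self]

theorem norm_stepIntegral_sub_le {s u q₁ q₂ : ℝ} (hx : ContinuousOn x (Icc s u)) (h₁ : s ≤ q₁)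
    (h₁₂ : q₁ ≤ q₂) (h₂ : q₂ ≤ u) :
    ‖stepIntegral B τ N φ x q₂ - stepIntegral B τ N φ x q₁‖ ≤
      ‖B‖ * (∑ i ∈ Finset.range N, ‖φ (τ (i + 1)) - φ (τ i)‖) * supNorm x s u := by
  rw [stepIntegral, stepIntegral, ← Finset.sum_sub_distrib, Finset.mul_sum, Finset.sum_mul]
  refine (norm_sum_le _ _).trans (Finset.sum_le_sum fun i _ => ?_)
  rw [← map_sub, sub_sub_sub_cancel_right]
  exact (B.le_opNorm₂ _ _).trans (by gcongr; exact norm_sub_max_le_supNorm hx h₁ h₁₂ h₂ _)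

end StepIntegral

theorem Fin.clamp_zero (m : ℕ) : Fin.clamp 0 m = 0 := Fin.ext (by simp)

theorem Fin.clamp_coe_eq_castSucc {m : ℕ} (k : Fin m) : Fin.clamp k m = k.castSucc :=
  Fin.ext (by simp [k.2.le])

theorem Fin.clamp_coe_add_one_eq_succ {m : ℕ} (k : Fin m) : Fin.clamp (k + 1) m = k.succ :=
  Fin.ext (by simp [Nat.succ_le_of_lt k.2])

section Euler

variable {d n N : ℕ} {D : Set (EuclideanSpace ℝ (Fin d))} {T : ℝ} {t : Fin (N + 1) → ℝ}
  {η y Φ : ℝ → EuclideanSpace ℝ (Fin d)} {x : ℝ → EuclideanSpace ℝ (Fin n)}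
  {F : EuclideanSpace ℝ (Fin d × Fin n) →L[ℝ] EuclideanSpace ℝ (Fin d)}
  {y₀ : EuclideanSpace ℝ (Fin d)}

theorem IsPartition.mem_Icc (ht : IsPartition T t) (i : Fin (N + 1)) : t i ∈ Icc 0 T :=
  ⟨ht.2.1 ▸ ht.1.monotone (Fin.zero_le i), ht.2.2 ▸ ht.1.monotone (Fin.le_last i)⟩

theorem IsPartition.length_pos (ht : IsPartition T t) (hT : 0 < T) : 0 < N := by
  refine Nat.pos_of_ne_zero fun hN => ?_
  subst hN
  exact hT.ne (ht.2.1.symm.trans ht.2.2)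

def eulerDriver (η : ℝ → EuclideanSpace ℝ (Fin d)) (x : ℝ → EuclideanSpace ℝ (Fin n))
    (F : EuclideanSpace ℝ (Fin d × Fin n) →L[ℝ] EuclideanSpace ℝ (Fin d))
    (t : Fin (N + 1) → ℝ) (Φ : ℝ → EuclideanSpace ℝ (Fin d)) (y₀ : EuclideanSpace ℝ (Fin d))
    (v : ℝ) : EuclideanSpace ℝ (Fin d) :=
  y₀ + (η v - η 0) + F (stepIntegral (outerTensorL d n) (fun j => t (Fin.clamp j N)) N Φ x v)

theorem eulerDriver_sub (a b : ℝ) :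
    eulerDriver η x F t Φ y₀ b - eulerDriver η x F t Φ y₀ a = (η b - η a) +
      F (stepIntegral (outerTensorL d n) (fun j => t (Fin.clamp j N)) N Φ x b -
        stepIntegral (outerTensorL d n) (fun j => t (Fin.clamp j N)) N Φ x a) := by
  simp only [eulerDriver, map_sub]
  abel

theorem IsImplicitEuler.skorohodSol (hE : IsImplicitEuler D η x F t y Φ y₀)
    (ht : IsPartition T t) (hT : 0 < T) : SkorohodSol D 0 T (eulerDriver η x F t Φ y₀) y Φ := by
  obtain ⟨hy₀, hΦ₀, hpieces⟩ := hE
  set τ : ℕ → ℝ := fun j => t (Fin.clamp j N)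
  have hτ : Monotone τ := ht.1.monotone.comp Fin.clamp_monotone
  have hτ₀ : τ 0 = t 0 := by simp only [τ, Fin.clamp_zero]
  have hΦτ₀ : Φ (τ 0) = 0 := hτ₀ ▸ hΦ₀
  have h := SkorohodSol.of_pieces hτ (ht.length_pos hT) (w := eulerDriver η x F t Φ y₀)
    (w' := fun k u => y (τ k) + (η u - η (τ k)) + F (outerTensor (Φ (τ k)) (x u - x (τ k))))
    (fun k hk => by
      simpa only [τ, Fin.clamp_coe_eq_castSucc ⟨k, hk⟩, Fin.clamp_coe_add_one_eq_succ ⟨k, hk⟩]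
        using hpieces ⟨k, hk⟩)
    (fun k hk u hu => by
      have e := stepIntegral_sub_of_mem_Icc (outerTensorL d n) τ N Φ x hτ hk hu
      rw [hΦτ₀, sub_zero, outerTensorL_apply] at e
      have h₀ : outerTensor (Φ (τ k)) (0 : EuclideanSpace ℝ (Fin n)) = 0 :=
        map_zero (outerTensorL d n (Φ (τ k)))
      rw [eulerDriver_sub, e, sub_self, sub_self, h₀, map_zero]
      abel)
    hΦτ₀
    (by rw [eulerDriver, stepIntegral_of_le _ _ _ _ _ hτ le_rfl, hτ₀, hy₀, ht.2.1]; simp)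
  have hτN : τ N = T := by simp only [τ, Fin.clamp_eq_last N N le_rfl, ht.2.2]
  rwa [hτ₀, ht.2.1, hτN] at h

theorem supNorm_eulerDriver_le (ht : IsPartition T t) (hη : ContinuousOn η (Icc 0 T))
    (hx : ContinuousOn x (Icc 0 T)) (hΦ : BoundedVariationOn Φ (Icc 0 T)) {s u : ℝ} (hs : 0 ≤ s)
    (hu : u ≤ T) :
    supNorm (eulerDriver η x F t Φ y₀) s u ≤
      supNorm η s u + ‖F‖ * totalVar Φ 0 T * supNorm x s u := by
  have hV : ∑ i ∈ Finset.range N, ‖Φ (t (Fin.clamp (i + 1) N)) - Φ (t (Fin.clamp i N))‖ ≤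
      totalVar Φ 0 T :=
    sum_norm_sub_le_totalVar hΦ (ht.1.monotone.comp Fin.clamp_monotone) (fun i => ht.mem_Icc _) N
  have hηsu := hη.mono (Icc_subset_Icc hs hu)
  have hxsu := hx.mono (Icc_subset_Icc hs hu)
  refine supNorm_le (add_nonneg (supNorm_nonneg η s u) (mul_nonneg (mul_nonneg (norm_nonneg F)
    (totalVar_nonneg Φ 0 T)) (supNorm_nonneg x s u))) fun a b h₁ h₁₂ h₂ => ?_
  rw [eulerDriver_sub]
  refine (norm_add_le _ _).trans (add_le_add (norm_sub_le_supNorm hηsu h₁ h₁₂ h₂) ?_)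
  calc ‖F (_ - _)‖ ≤ ‖F‖ * (‖outerTensorL d n‖ * _ * supNorm x s u) :=
        F.le_opNorm_of_le (norm_stepIntegral_sub_le _ _ _ _ _ hxsu h₁ h₁₂ h₂)
    _ ≤ ‖F‖ * (1 * totalVar Φ 0 T * supNorm x s u) := by
        gcongr
        · exact supNorm_nonneg x s u
        · exact norm_outerTensorL_le
    _ = ‖F‖ * totalVar Φ 0 T * supNorm x s u := by ring

end Euler

theorem implicit_euler_estimate_general {d n : ℕ}
    (D : Set (EuclideanSpace ℝ (Fin d))) (T' C_D : ℝ) (hT' : 0 < T')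
    (hH1 : CondH1 D T' C_D)
    (η : ℝ → EuclideanSpace ℝ (Fin d)) (hη : ContinuousOn η (Set.Icc 0 T'))
    (x : ℝ → EuclideanSpace ℝ (Fin n)) (hxc : ContinuousOn x (Set.Icc 0 T'))
    (F : EuclideanSpace ℝ (Fin d × Fin n) →L[ℝ] EuclideanSpace ℝ (Fin d))
    (y₀ : EuclideanSpace ℝ (Fin d))
    (N : ℕ) (t : Fin (N + 1) → ℝ) (ht : IsPartition T' t)
    (y Φ : ℝ → EuclideanSpace ℝ (Fin d)) (hEuler : IsImplicitEuler D η x F t y Φ y₀)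
    (hsmall : supNorm x 0 T' ≤ 1 / (10 * C_D * ‖F‖)) :
    totalVar Φ 0 T' ≤ 2 * C_D * supNorm η 0 T' ∧
    ∀ s u, 0 ≤ s → s ≤ u → u ≤ T' →
      totalVar Φ s u ≤
        5 / 4 * C_D * supNorm η s u +
          10 * C_D ^ 2 * ‖F‖ * supNorm η 0 T' * supNorm x s u := by
  obtain ⟨-, hCD, hSP⟩ := hH1
  have hsol := hEuler.skorohodSol ht hT'
  have hvar (s u : ℝ) (hs : 0 ≤ s) (hsu : s ≤ u) (hu : u ≤ T') :
      totalVar Φ s u ≤ C_D * (supNorm η s u + ‖F‖ * totalVar Φ 0 T' * supNorm x s u) :=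
    ((hSP 0 T' le_rfl hT'.le le_rfl _ hsol.continuousOn_driver
      (hsol.driver_mem_closure hT'.le)).2.2 y Φ hsol s u hs hsu hu).trans
      (mul_le_mul_of_nonneg_left (supNorm_eulerDriver_le ht hη hxc hsol.phi_bv hs hu) hCD.le)
  have hfeedback : C_D * ‖F‖ * supNorm x 0 T' ≤ 1 / 10 := by
    rw [mul_comm]
    exact mul_le_of_le_div₀ (by norm_num) (mul_nonneg hCD.le (norm_nonneg F))
      (by rwa [div_div, ← mul_assoc])
  have hV : totalVar Φ 0 T' ≤ 10 / 9 * C_D * supNorm η 0 T' := by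
    nlinarith [hvar 0 T' le_rfl hT'.le le_rfl,
      mul_le_mul_of_nonneg_right hfeedback (totalVar_nonneg Φ 0 T')]
  refine ⟨by nlinarith [mul_nonneg hCD.le (supNorm_nonneg η 0 T')], fun s u hs hsu hu => ?_⟩
  have hxsu : 0 ≤ C_D * ‖F‖ * supNorm x s u :=
    mul_nonneg (mul_nonneg hCD.le (norm_nonneg F)) (supNorm_nonneg x s u)
  calc totalVar Φ s u
      ≤ C_D * supNorm η s u + C_D * ‖F‖ * supNorm x s u * totalVar Φ 0 T' := by
        linarith [hvar s u hs hsu hu]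
    _ ≤ C_D * supNorm η s u + C_D * ‖F‖ * supNorm x s u * (10 / 9 * C_D * supNorm η 0 T') := by
        gcongr
    _ ≤ _ := by
        nlinarith [mul_nonneg hCD.le (supNorm_nonneg η s u),
          mul_nonneg (mul_nonneg hxsu hCD.le) (supNorm_nonneg η 0 T')]

/-- from the proof of Lemma 4.2 (2): variation estimates for the
Euler approximation of the implicit Skorohod equation on a small time interval. -/
theorem implicit_euler_estimate {d n : ℕ}
    (D : Set (EuclideanSpace ℝ (Fin d))) (T' C_D : ℝ) (hT' : 0 < T')
    (hH1 : CondH1 D T' C_D)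
    (η : ℝ → EuclideanSpace ℝ (Fin d)) (hη : ContinuousOn η (Set.Icc 0 T')) (hη0 : η 0 = 0)
    (x : ℝ → EuclideanSpace ℝ (Fin n)) (hxc : ContinuousOn x (Set.Icc 0 T')) (hx0 : x 0 = 0)
    (F : EuclideanSpace ℝ (Fin d × Fin n) →L[ℝ] EuclideanSpace ℝ (Fin d)) (hF : F ≠ 0)
    (y₀ : EuclideanSpace ℝ (Fin d)) (hy₀ : y₀ ∈ closure D)
    (N : ℕ) (t : Fin (N + 1) → ℝ) (ht : IsPartition T' t)
    (y Φ : ℝ → EuclideanSpace ℝ (Fin d)) (hEuler : IsImplicitEuler D η x F t y Φ y₀)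
    (hsmall : supNorm x 0 T' ≤ 1 / (10 * C_D * ‖F‖)) :
    totalVar Φ 0 T' ≤ 2 * C_D * supNorm η 0 T' ∧
    ∀ s u, 0 ≤ s → s ≤ u → u ≤ T' →
      totalVar Φ s u ≤
        5 / 4 * C_D * supNorm η s u +
          10 * C_D ^ 2 * ‖F‖ * supNorm η 0 T' * supNorm x s u :=
  implicit_euler_estimate_general D T' C_D hT' hH1 η hη x hxc F y₀ N t ht y Φ hEuler hsmall

end
end
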